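/- Let S be a factorizable Boolean sublattice. Then S is a UFS if and only if the Boolean sublattice ⟨A(S) \ A_I(S)⟩ generated by the non-isolated quarks of S is a UFS. -/
import Mathlib


open scoped ENNReal

/-- A Boolean sublattice: a set of finite subsets of `ℕ` that contains `∅` and is
closed under binary unions (ordered by inclusion, with joins given by unions). -/
def IsBSL (S : Set (Finset ℕ)) : Prop :=
  ∅ ∈ S ∧ ∀ A ∈ S, ∀ B ∈ S, A ∪ B ∈ S

/-- A quark of `S`: a nonempty element of `S` covering `∅` in `S`, i.e. there is no
`B ∈ S` with `∅ ⊊ B ⊊ A`. -/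
def IsQuark (S : Set (Finset ℕ)) (A : Finset ℕ) : Prop :=
  A ∈ S ∧ A ≠ ∅ ∧ ∀ B ∈ S, B ≠ ∅ → ¬ B ⊂ A

/-- `z` is a factorization of `X` into quarks of `S`: a finite set of quarks whose
union is `X` such that no proper subset of `z` has union `X`. -/
def IsFactorization (S : Set (Finset ℕ)) (X : Finset ℕ) (z : Finset (Finset ℕ)) : Prop :=
  (∀ A ∈ z, IsQuark S A) ∧ z.sup id = X ∧ ∀ w, w ⊂ z → w.sup id ≠ X

/-- The set `Z(X)` of factorizations of `X` in `S`. -/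
def Factorizations (S : Set (Finset ℕ)) (X : Finset ℕ) : Set (Finset (Finset ℕ)) :=
  {z | IsFactorization S X z}

/-- `S` is factorizable: every nonempty element of `S` has a factorization. -/
def Factorizable (S : Set (Finset ℕ)) : Prop :=
  ∀ X ∈ S, X ≠ ∅ → (Factorizations S X).Nonempty

/-- `S` is a unique factorization semilattice: every nonempty element of `S` has
exactly one factorization. -/
def IsUFS (S : Set (Finset ℕ)) : Prop :=
  ∀ X ∈ S, X ≠ ∅ → ∃! z, z ∈ Factorizations S X

/-- `S` is a half-factorial semilattice: for every nonempty `X ∈ S` the set of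
factorization lengths of `X` is a singleton. -/
def IsHFS (S : Set (Finset ℕ)) : Prop :=
  ∀ X ∈ S, X ≠ ∅ → (Factorizations S X).Nonempty ∧
    ∀ z ∈ Factorizations S X, ∀ z' ∈ Factorizations S X, z.card = z'.card

/-- `S` is a length-factorial semilattice: two distinct factorizations of the same
nonempty element of `S` have different cardinalities. -/
def IsLFS (S : Set (Finset ℕ)) : Prop :=
  ∀ X ∈ S, X ≠ ∅ → ∀ z ∈ Factorizations S X, ∀ z' ∈ Factorizations S X,
    z.card = z'.card → z = z'

/-- The Boolean sublattice generated by a collection `𝒜` of finite subsets of `ℕ`: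
the smallest set of finite subsets of `ℕ` containing `{∅} ∪ 𝒜` and closed under
binary unions. -/
def genBSL (𝒜 : Set (Finset ℕ)) : Set (Finset ℕ) :=
  ⋂₀ {T | IsBSL T ∧ 𝒜 ⊆ T}

/-- An isolated quark: a quark disjoint from every other quark of `S`. -/
def IsIsolatedQuark (S : Set (Finset ℕ)) (A : Finset ℕ) : Prop :=
  IsQuark S A ∧ ∀ B, IsQuark S B → B ≠ A → Disjoint A B

/-- An excess quark: a quark each of whose elements belongs to some other quark. -/
def IsExcessQuark (S : Set (Finset ℕ)) (A : Finset ℕ) : Prop :=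
  IsQuark S A ∧ ∀ j ∈ A, ∃ B, IsQuark S B ∧ B ≠ A ∧ j ∈ B

/-- The quarkic graph of `S`: vertices are the quarks of `S`, with an edge between
distinct quarks having nonempty intersection. -/
def quarkicGraph (S : Set (Finset ℕ)) : SimpleGraph {A : Finset ℕ // IsQuark S A} :=
  SimpleGraph.fromRel (fun A B => ((A : Finset ℕ) ∩ (B : Finset ℕ)).Nonempty)

/-- The vertex set `V(C)` of a connected component of the quarkic graph, as a set of
finite subsets of `ℕ`. -/
def compVerts (S : Set (Finset ℕ)) (C : (quarkicGraph S).ConnectedComponent) :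
    Set (Finset ℕ) :=
  Subtype.val '' C.supp

/-- The pairing graph of `S` (for `S` with quarks of size at most 2): vertices are `ℕ`,
with an edge between distinct `a`, `b` whenever `{a, b}` is a quark of `S`. -/
def pairingGraph (S : Set (Finset ℕ)) : SimpleGraph ℕ :=
  SimpleGraph.fromRel (fun a b => IsQuark S {a, b})

/-- The edge set of a connected component `C` of the pairing graph, each edge `{a,b}`
regarded as the 2-element subset `{a, b}` of `ℕ`. -/
def compEdgeSets (S : Set (Finset ℕ)) (C : (pairingGraph S).ConnectedComponent) :
    Set (Finset ℕ) :=
  {A | ∃ a b : ℕ, (pairingGraph S).Adj a b ∧ a ∈ C.supp ∧ A = {a, b}}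

/-- `v` has degree at least `n` in `G` (valid also for infinite graphs). -/
def DegAtLeast {V : Type*} (G : SimpleGraph V) (v : V) (n : ℕ) : Prop :=
  ∃ s : Finset V, s.card = n ∧ ∀ u ∈ s, G.Adj v u

/-- `v` has degree exactly `n` in `G`: its neighbor set is a finite set of size `n`. -/
def DegExactly {V : Type*} (G : SimpleGraph V) (v : V) (n : ℕ) : Prop :=
  ∃ s : Finset V, s.card = n ∧ ∀ u, G.Adj v u ↔ u ∈ s

/-- A leaf: a vertex of degree exactly 1. -/
def IsLeaf {V : Type*} (G : SimpleGraph V) (v : V) : Prop := DegExactly G v 1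

/-- A candy graph: a connected simple graph of diameter at most 4 that contains a
cycle of length `k` if and only if `k = 4`. -/
def IsCandy {V : Type*} (G : SimpleGraph V) : Prop :=
  G.Connected ∧
  (∀ u v : V, ∃ p : G.Walk u v, p.length ≤ 4) ∧
  (∀ k : ℕ, (∃ (v : V) (c : G.Walk v v), c.IsCycle ∧ c.length = k) ↔ k = 4)

/-- The connected component `C` of `G` contains no cycle. -/
def CompAcyclic {V : Type*} (G : SimpleGraph V) (C : G.ConnectedComponent) : Prop :=
  ∀ v ∈ C.supp, ∀ c : G.Walk v v, ¬ c.IsCycle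

/-- Every path inside the connected component `C` has length at most `d` (for a tree
component this says its diameter is at most `d`). -/
def CompDiamLe {V : Type*} (G : SimpleGraph V) (C : G.ConnectedComponent) (d : ℕ) : Prop :=
  ∀ (u v : V), u ∈ C.supp → ∀ p : G.Walk u v, p.IsPath → p.length ≤ d

/-- The connected component `C` of `G` is (as an induced subgraph) the cycle graph on
`n` vertices. -/
def CompIsCycleGraph {V : Type*} (G : SimpleGraph V) (C : G.ConnectedComponent)
    (n : ℕ) : Prop :=
  ∃ v : Fin n → V, Function.Injective v ∧ C.supp = Set.range v ∧
    ∀ i j : Fin n, G.Adj (v i) (v j) ↔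
      ((j : ℕ) = ((i : ℕ) + 1) % n ∨ (i : ℕ) = ((j : ℕ) + 1) % n)

/-- The connected component `C` of `G` is (as an induced subgraph) a candy graph:
it has diameter at most 4 and contains a cycle of length `k` iff `k = 4`. -/
def CompIsCandy {V : Type*} (G : SimpleGraph V) (C : G.ConnectedComponent) : Prop :=
  (∀ u v, u ∈ C.supp → v ∈ C.supp → ∃ p : G.Walk u v, p.length ≤ 4) ∧
  (∀ k : ℕ, (∃ v ∈ C.supp, ∃ c : G.Walk v v, c.IsCycle ∧ c.length = k) ↔ k = 4)

/-- The set of factorization lengths `L(X)` of `X` in `S`. -/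
def lengthsOf (S : Set (Finset ℕ)) (X : Finset ℕ) : Set ℕ :=
  Finset.card '' Factorizations S X

/-- The elasticity `ρ(X) = sup L(X) / min L(X)` of a nonempty element `X` of `S`,
valued in the extended nonnegative reals. -/
noncomputable def elasticityOf (S : Set (Finset ℕ)) (X : Finset ℕ) : ℝ≥0∞ :=
  (⨆ n ∈ lengthsOf S X, (n : ℝ≥0∞)) / ((sInf (lengthsOf S X) : ℕ) : ℝ≥0∞)

/-- The elasticity `ρ(S)` of a Boolean sublattice `S`. -/
noncomputable def elasticity (S : Set (Finset ℕ)) : ℝ≥0∞ :=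
  ⨆ X ∈ {X | X ∈ S ∧ X ≠ ∅}, elasticityOf S X

section Aux

lemma isBSL_genBSL (𝒜 : Set (Finset ℕ)) : IsBSL (genBSL 𝒜) := by
  constructor
  · intro T hT; exact hT.1.1
  · intro A hA B hB T hT; exact hT.1.2 A (hA T hT) B (hB T hT)

lemma subset_genBSL (𝒜 : Set (Finset ℕ)) : 𝒜 ⊆ genBSL 𝒜 := by
  intro A hA T hT; exact hT.2 hA

lemma genBSL_subset {𝒜 T : Set (Finset ℕ)} (h1 : IsBSL T) (h2 : 𝒜 ⊆ T) :
    genBSL 𝒜 ⊆ T :=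
  Set.sInter_subset_of_mem ⟨h1, h2⟩

lemma sup_mem_genBSL (𝒜 : Set (Finset ℕ)) :
    ∀ z : Finset (Finset ℕ), (↑z : Set (Finset ℕ)) ⊆ 𝒜 → z.sup id ∈ genBSL 𝒜 := by
  intro z
  induction z using Finset.induction_on with
  | empty => intro _; simpa using (isBSL_genBSL 𝒜).1
  | @insert A s hA ih =>
    intro hz
    rw [Finset.sup_insert]
    exact (isBSL_genBSL 𝒜).2 A (subset_genBSL 𝒜 (hz (by simp))) _
      (ih (fun B hB => hz (by simp [hB])))

lemma mem_genBSL_iff (𝒜 : Set (Finset ℕ)) (X : Finset ℕ) :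
    X ∈ genBSL 𝒜 ↔ ∃ z : Finset (Finset ℕ), (↑z : Set (Finset ℕ)) ⊆ 𝒜 ∧ z.sup id = X := by
  constructor
  · intro hX
    refine genBSL_subset (T := {X : Finset ℕ | ∃ z : Finset (Finset ℕ),
      (↑z : Set (Finset ℕ)) ⊆ 𝒜 ∧ z.sup id = X}) ?_ ?_ hX
    · refine ⟨⟨∅, by simp⟩, ?_⟩
      rintro A ⟨zA, hzA, rfl⟩ B ⟨zB, hzB, rfl⟩
      refine ⟨zA ∪ zB, ?_, ?_⟩
      · push_cast; exact Set.union_subset hzA hzB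
      · exact Finset.sup_union
    · intro A hA; exact ⟨{A}, by simpa using hA, by simp⟩
  · rintro ⟨z, hz, rfl⟩
    exact sup_mem_genBSL 𝒜 z hz

/-- The non-isolated quarks. -/
def nonIso (S : Set (Finset ℕ)) : Set (Finset ℕ) :=
  {A | IsQuark S A ∧ ¬ IsIsolatedQuark S A}

variable {S : Set (Finset ℕ)}

lemma genN_sub (hS : IsBSL S) : genBSL (nonIso S) ⊆ S :=
  genBSL_subset hS (fun A hA => hA.1.1)

/-- Any quark of `S` contained in an element of `genBSL (nonIso S)` is non-isolated. -/
lemma quark_subset_noniso {X B : Finset ℕ} (hX : X ∈ genBSL (nonIso S))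
    (hB : IsQuark S B) (hBX : B ⊆ X) : B ∈ nonIso S := by
  refine ⟨hB, fun hiso => ?_⟩
  obtain ⟨z, hzN, rfl⟩ := (mem_genBSL_iff _ X).1 hX
  obtain ⟨j, hj⟩ := Finset.nonempty_iff_ne_empty.2 hB.2.1
  have hjX : j ∈ z.sup id := hBX hj
  rw [Finset.mem_sup] at hjX
  obtain ⟨C, hCz, hjC⟩ := hjX
  have hCN : C ∈ nonIso S := hzN hCz
  have hCB : C ≠ B := fun h => hCN.2 (h ▸ hiso)
  have := hiso.2 C hCN.1 hCB
  exact (Finset.disjoint_left.1 this hj) hjC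

lemma quark_genN_of_mem {A : Finset ℕ} (hS : IsBSL S) (hA : A ∈ nonIso S) :
    IsQuark (genBSL (nonIso S)) A :=
  ⟨subset_genBSL _ hA, hA.1.2.1,
    fun B hB hBne => hA.1.2.2 B (genN_sub hS hB) hBne⟩

lemma mem_of_quark_genN {A : Finset ℕ} (hA : IsQuark (genBSL (nonIso S)) A) : A ∈ nonIso S := by
  obtain ⟨hAT, hAne, hmin⟩ := hA
  obtain ⟨j, hj⟩ := Finset.nonempty_iff_ne_empty.2 hAne
  obtain ⟨z, hzN, hsup⟩ := (mem_genBSL_iff _ A).1 hAT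
  have hjz : j ∈ z.sup id := hsup ▸ hj
  rw [Finset.mem_sup] at hjz
  obtain ⟨C, hCz, hjC⟩ := hjz
  have hCN : C ∈ nonIso S := hzN hCz
  have hCA : C ⊆ A := hsup ▸ Finset.le_sup (f := id) hCz
  have hCT : C ∈ genBSL (nonIso S) := subset_genBSL _ hCN
  have : C = A := by
    by_contra hne
    exact hmin C hCT hCN.1.2.1 ⟨hCA, fun h => hne (le_antisymm hCA h)⟩
  exact this ▸ hCN

lemma fact_eq (hS : IsBSL S) {X : Finset ℕ} (hX : X ∈ genBSL (nonIso S)) :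
    Factorizations (genBSL (nonIso S)) X = Factorizations S X := by
  ext z
  constructor
  · rintro ⟨hq, hsup, hmin⟩
    exact ⟨fun A hA => (mem_of_quark_genN (hq A hA)).1, hsup, hmin⟩
  · rintro ⟨hq, hsup, hmin⟩
    refine ⟨fun A hA => ?_, hsup, hmin⟩
    have hAX : A ⊆ X := hsup ▸ Finset.le_sup (f := id) hA
    exact quark_genN_of_mem hS (quark_subset_noniso hX (hq A hA) hAX)

/-- Every isolated quark contained in `X` belongs to every factorization of `X`. -/
lemma iso_mem_fact {X A : Finset ℕ} {z : Finset (Finset ℕ)}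
    (hz : z ∈ Factorizations S X) (hA : IsIsolatedQuark S A) (hAX : A ⊆ X) :
    A ∈ z := by
  obtain ⟨j, hj⟩ := Finset.nonempty_iff_ne_empty.2 hA.1.2.1
  have hjX : j ∈ z.sup id := hz.2.1 ▸ hAX hj
  rw [Finset.mem_sup] at hjX
  obtain ⟨B, hBz, hjB⟩ := hjX
  have hBq : IsQuark S B := hz.1 B hBz
  by_cases hBA : B = A
  · exact hBA ▸ hBz
  · exact absurd hjB (Finset.disjoint_left.1 (hA.2 B hBq hBA) hj)

end Aux

/-- A factorizable Boolean sublattice `S` is a UFS iff the Boolean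
sublattice generated by its non-isolated quarks is a UFS. -/
theorem stmt_6 (S : Set (Finset ℕ)) (hS : IsBSL S) (hfac : Factorizable S) :
    IsUFS S ↔ IsUFS (genBSL {A | IsQuark S A ∧ ¬ IsIsolatedQuark S A}) := by
  classical
  show IsUFS S ↔ IsUFS (genBSL (nonIso S))
  constructor
  · -- S UFS → T UFS
    intro hUFS X hX hXne
    have hXS : X ∈ S := genN_sub hS hX
    rw [fact_eq hS hX]
    obtain ⟨z, hz, huniq⟩ := hUFS X hXS hXne
    exact ⟨z, hz, huniq⟩
  · -- T UFS → S UFS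
    intro hUFS X hX hXne
    obtain ⟨z₀, hz₀⟩ := hfac X hX hXne
    refine ⟨z₀, hz₀, fun z' hz' => ?_⟩
    -- it suffices to show any two factorizations are equal
    suffices key : ∀ z z', z ∈ Factorizations S X → z' ∈ Factorizations S X → z = z' from
      key z' z₀ hz' hz₀
    intro z z' hz hz'
    set P : Finset ℕ → Prop := fun A => IsIsolatedQuark S A with hP
    -- the isolated parts agree
    have hfilter : z.filter P = z'.filter P := by
      ext A
      simp only [Finset.mem_filter]
      constructor
      · rintro ⟨hAz, hPA⟩
        have hAX : A ⊆ X := hz.2.1 ▸ Finset.le_sup (f := id) hAz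
        exact ⟨iso_mem_fact hz' hPA hAX, hPA⟩
      · rintro ⟨hAz, hPA⟩
        have hAX : A ⊆ X := hz'.2.1 ▸ Finset.le_sup (f := id) hAz
        exact ⟨iso_mem_fact hz hPA hAX, hPA⟩
    -- the non-isolated parts have the same union
    have hsplit : ∀ w : Finset (Finset ℕ), w ∈ Factorizations S X →
        (w.filter (fun A => ¬ P A)).sup id = X \ (w.filter P).sup id := by
      intro w hw
      have hdisj : Disjoint ((w.filter P).sup id) ((w.filter (fun A => ¬ P A)).sup id) := by
        rw [Finset.disjoint_left]
        intro j hjU hjY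
        rw [Finset.mem_sup] at hjU hjY
        obtain ⟨A, hA, hjA⟩ := hjU
        obtain ⟨B, hB, hjB⟩ := hjY
        rw [Finset.mem_filter] at hA hB
        have hAB : B ≠ A := fun h => hB.2 (h ▸ hA.2)
        exact (Finset.disjoint_left.1 (hA.2.2 B (hw.1 B hB.1) hAB) hjA) hjB
      have hXeq : (w.filter P).sup id ∪ (w.filter (fun A => ¬ P A)).sup id = X := by
        rw [← Finset.sup_eq_union, ← Finset.sup_union, Finset.filter_union_filter_not_eq]
        exact hw.2.1
      rw [← hXeq, Finset.union_sdiff_cancel_left hdisj]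
    have hYeq : (z.filter (fun A => ¬ P A)).sup id = (z'.filter (fun A => ¬ P A)).sup id := by
      rw [hsplit z hz, hsplit z' hz', hfilter]
    -- non-isolated parts are equal
    have hfilterN : z.filter (fun A => ¬ P A) = z'.filter (fun A => ¬ P A) := by
      set Y := (z.filter (fun A => ¬ P A)).sup id with hY
      by_cases hYne : Y = ∅
      · have h1 : z.filter (fun A => ¬ P A) = ∅ := by
          rw [Finset.eq_empty_iff_forall_notMem]
          intro B hB
          have hBY : B ⊆ Y := Finset.le_sup (f := id) hB
          rw [Finset.mem_filter] at hB
          exact (hz.1 B hB.1).2.1 (Finset.subset_empty.1 (hYne ▸ hBY))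
        have h2 : z'.filter (fun A => ¬ P A) = ∅ := by
          rw [Finset.eq_empty_iff_forall_notMem]
          intro B hB
          have hBY : B ⊆ Y := hYeq ▸ Finset.le_sup (f := id) hB
          rw [Finset.mem_filter] at hB
          exact (hz'.1 B hB.1).2.1 (Finset.subset_empty.1 (hYne ▸ hBY))
        rw [h1, h2]
      · -- Y is a nonempty element of T
        have hmemN : ∀ w : Finset (Finset ℕ), w ∈ Factorizations S X →
            (↑(w.filter (fun A => ¬ P A)) : Set (Finset ℕ)) ⊆
              {A | IsQuark S A ∧ ¬ IsIsolatedQuark S A} := by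
          intro w hw B hB
          rw [Finset.mem_coe, Finset.mem_filter] at hB
          exact ⟨hw.1 B hB.1, hB.2⟩
        have hYT : Y ∈ genBSL (nonIso S) := (mem_genBSL_iff _ Y).2 ⟨z.filter (fun A => ¬ P A), hmemN z hz, rfl⟩
        -- both non-isolated parts are factorizations of Y in S
        have hfactY : ∀ w : Finset (Finset ℕ), w ∈ Factorizations S X →
            (w.filter (fun A => ¬ P A)).sup id = Y →
            w.filter (fun A => ¬ P A) ∈ Factorizations S Y := by
          intro w hw hwY
          refine ⟨fun A hA => hw.1 A (Finset.filter_subset _ _ hA), hwY, ?_⟩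
          intro v hv hvY
          have hsub : v ∪ w.filter P ⊂ w := by
            constructor
            · exact Finset.union_subset
                (hv.1.trans (Finset.filter_subset _ _)) (Finset.filter_subset _ _)
            · intro hwsub
              obtain ⟨A, hA1, hA2⟩ := Finset.exists_of_ssubset hv
              have hAw : A ∈ w := Finset.filter_subset _ _ hA1
              have := hwsub hAw
              rw [Finset.mem_union] at this
              rcases this with h | h
              · exact hA2 h
              · rw [Finset.mem_filter] at hA1 h
                exact hA1.2 h.2
          apply hw.2.2 _ hsub
          rw [Finset.sup_union, hvY]
          have := hsplit w hw
          rw [hwY] at this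
          -- Y = X \ (w.filter P).sup id ; so Y ∪ (w.filter P).sup id = X
          have hXeq : (w.filter P).sup id ∪ (w.filter (fun A => ¬ P A)).sup id = X := by
            rw [← Finset.sup_eq_union, ← Finset.sup_union, Finset.filter_union_filter_not_eq]
            exact hw.2.1
          rw [hwY] at hXeq
          rw [Finset.sup_eq_union, ← hXeq, Finset.union_comm]
        have h1 : z.filter (fun A => ¬ P A) ∈ Factorizations S Y := hfactY z hz rfl
        have h2 : z'.filter (fun A => ¬ P A) ∈ Factorizations S Y := hfactY z' hz' hYeq.symm
        rw [← fact_eq hS hYT] at h1 h2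
        obtain ⟨w₀, _, huniqY⟩ := hUFS Y hYT hYne
        rw [huniqY _ h1, huniqY _ h2]
    -- combine
    ext A
    by_cases hPA : P A
    · constructor
      · intro hAz
        have : A ∈ z.filter P := Finset.mem_filter.2 ⟨hAz, hPA⟩
        rw [hfilter] at this
        exact (Finset.mem_filter.1 this).1
      · intro hAz
        have : A ∈ z'.filter P := Finset.mem_filter.2 ⟨hAz, hPA⟩
        rw [← hfilter] at this
        exact (Finset.mem_filter.1 this).1
    · constructor
      · intro hAz
        have : A ∈ z.filter (fun A => ¬ P A) := Finset.mem_filter.2 ⟨hAz, hPA⟩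
        rw [hfilterN] at this
        exact (Finset.mem_filter.1 this).1
      · intro hAz
        have : A ∈ z'.filter (fun A => ¬ P A) := Finset.mem_filter.2 ⟨hAz, hPA⟩
        rw [← hfilterN] at this
        exact (Finset.mem_filter.1 this).1
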